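/- arXiv:1103.2580 — 8 statements merged into one kernel-verified Lean document; each statement's English description precedes it below -/
import Mathlib

section
/- For all a, b > 0, (a + √(ab) + b)/3 ≤ ((√a + √b)/2) · √((a+b)/2). -/
theorem n3_le_n2 (a b : ℝ) (ha : 0 < a) (hb : 0 < b) :
    (a + Real.sqrt (a * b) + b) / 3 ≤
      ((Real.sqrt a + Real.sqrt b) / 2) * Real.sqrt ((a + b) / 2) := by
  set x := Real.sqrt a with hx
  set y := Real.sqrt b with hy
  set s := Real.sqrt ((a + b) / 2) with hs
  have hx0 : 0 < x := Real.sqrt_pos.mpr ha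
  have hy0 : 0 < y := Real.sqrt_pos.mpr hb
  have hs0 : 0 ≤ s := Real.sqrt_nonneg _
  have hx2 : x ^ 2 = a := Real.sq_sqrt ha.le
  have hy2 : y ^ 2 = b := Real.sq_sqrt hb.le
  have hs2 : s ^ 2 = (a + b) / 2 := Real.sq_sqrt (by positivity)
  have hxy : Real.sqrt (a * b) = x * y := Real.sqrt_mul ha.le b
  nlinarith [sq_nonneg (x - y), sq_nonneg (3 * (x + y) * s - 2 * (x ^ 2 + x * y + y ^ 2)),
    mul_pos hx0 hy0, mul_nonneg (mul_nonneg hx0.le hy0.le) hs0,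
    mul_pos (mul_pos hx0 hy0) (mul_pos hx0 hy0), sq_nonneg ((x - y) * (x + y)),
    mul_nonneg (add_pos hx0 hy0).le hs0]
end

section
/- For all a, b > 0 with a ≠ b, (√a + √b)/2 ≤ 2(b^(3/2) - a^(3/2))/(3(b - a)) ≤ √((a+b)/2). -/
lemma dp_key (a b : ℝ) (ha : 0 < a) (hb : 0 < b) (hlt : a < b) :
    (Real.sqrt a + Real.sqrt b) / 2 ≤
        2 * (b ^ ((3:ℝ)/2) - a ^ ((3:ℝ)/2)) / (3 * (b - a)) ∧
      2 * (b ^ ((3:ℝ)/2) - a ^ ((3:ℝ)/2)) / (3 * (b - a)) ≤ Real.sqrt ((a + b) / 2) := by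
  have hx : 0 < Real.sqrt a := Real.sqrt_pos.mpr ha
  have hy : 0 < Real.sqrt b := Real.sqrt_pos.mpr hb
  set x := Real.sqrt a with hxdef
  set y := Real.sqrt b with hydef
  have hx2 : x ^ 2 = a := Real.sq_sqrt ha.le
  have hy2 : y ^ 2 = b := Real.sq_sqrt hb.le
  have hxy : x < y := Real.sqrt_lt_sqrt ha.le hlt
  have ha3 : a ^ ((3:ℝ)/2) = x ^ 3 := by
    rw [show ((3:ℝ)/2) = ((1:ℝ)/2) * (3:ℕ) by norm_num, Real.rpow_mul ha.le,
      Real.rpow_natCast, hxdef, Real.sqrt_eq_rpow]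
  have hb3 : b ^ ((3:ℝ)/2) = y ^ 3 := by
    rw [show ((3:ℝ)/2) = ((1:ℝ)/2) * (3:ℕ) by norm_num, Real.rpow_mul hb.le,
      Real.rpow_natCast, hydef, Real.sqrt_eq_rpow]
  have hden : 0 < 3 * (b - a) := by linarith
  have hyx : 0 < y - x := by linarith
  constructor
  · rw [le_div_iff₀ hden, ha3, hb3, ← hx2, ← hy2]
    nlinarith [mul_nonneg hyx.le (sq_nonneg (x - y))]
  · set z := Real.sqrt ((a + b) / 2) with hzdef
    have hz : 0 ≤ z := Real.sqrt_nonneg _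
    have hz2 : z ^ 2 = (a + b) / 2 := Real.sq_sqrt (by linarith)
    rw [div_le_iff₀ hden, ha3, hb3, ← hx2, ← hy2]
    have hz2' : z ^ 2 = (x ^ 2 + y ^ 2) / 2 := by rw [hz2, hx2, hy2]
    have key : 2 * (x ^ 2 + x * y + y ^ 2) ≤ 3 * z * (x + y) := by
      have hsq : 4 * (x ^ 2 + x * y + y ^ 2) ^ 2 ≤ 9 * z ^ 2 * (x + y) ^ 2 := by
        rw [hz2']
        nlinarith [sq_nonneg (x - y), mul_pos hx hy, sq_nonneg (x + y)]
      nlinarith [hsq, mul_pos hx hy, sq_nonneg (x + y), mul_nonneg hz (add_pos hx hy).le]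
    nlinarith [mul_le_mul_of_nonneg_left key hyx.le]

theorem dragomir_pearce_half (a b : ℝ) (ha : 0 < a) (hb : 0 < b) (hab : a ≠ b) :
    (Real.sqrt a + Real.sqrt b) / 2 ≤
        2 * (b ^ ((3:ℝ)/2) - a ^ ((3:ℝ)/2)) / (3 * (b - a)) ∧
      2 * (b ^ ((3:ℝ)/2) - a ^ ((3:ℝ)/2)) / (3 * (b - a)) ≤ Real.sqrt ((a + b) / 2) := by
  rcases hab.lt_or_gt with h | h
  · exact dp_key a b ha hb h
  · have hkey := dp_key b a hb ha h
    have hne : b - a ≠ 0 := sub_ne_zero.mpr (Ne.symm hab)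
    have hne' : a - b ≠ 0 := sub_ne_zero.mpr hab
    have heq : 2 * (b ^ ((3:ℝ)/2) - a ^ ((3:ℝ)/2)) / (3 * (b - a)) =
        2 * (a ^ ((3:ℝ)/2) - b ^ ((3:ℝ)/2)) / (3 * (a - b)) := by
      field_simp
      ring
    rw [heq, add_comm (Real.sqrt a), add_comm a b]
    exact hkey
end

section
/- The function M_{AL}(a,b) = (a+b)/2 - L(a,b) is nonnegative and convex on the positive quadrant {(a,b) : a, b > 0}. -/
noncomputable def logMean (a b : ℝ) : ℝ :=
  if a = b then a else (b - a) / (Real.log b - Real.log a)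

noncomputable def MAL (p : ℝ × ℝ) : ℝ :=
  (p.1 + p.2) / 2 - logMean p.1 p.2

/-!
The logarithmic mean is an average of weighted geometric means,
`L(a, b) = ∫₀¹ a ^ t * b ^ (1 - t) dt`. For each `t ∈ [0, 1]` the weighted geometric mean is
bounded by the weighted arithmetic mean `t * a + (1 - t) * b`, whose average over `t` is `A(a, b)`,
and it is jointly concave, being positively homogeneous and superadditive (Hölder's inequality).
Integrating in `t` gives `L ≤ A` and the concavity of `L`; since `A` is linear, `A - L` is convex.
-/

open Real Set intervalIntegral

lemma continuous_rpow_mul_rpow {a b : ℝ} (ha : 0 < a) (hb : 0 < b) :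
    Continuous fun t : ℝ => a ^ t * b ^ (1 - t) := by
  fun_prop (disch := positivity)

lemma logMean_eq_integral {a b : ℝ} (ha : 0 < a) (hb : 0 < b) :
    logMean a b = ∫ t in (0 : ℝ)..1, a ^ t * b ^ (1 - t) := by
  rcases eq_or_ne a b with rfl | hab
  · simp [logMean, ← rpow_add ha]
  set c := log a - log b
  have hc : c ≠ 0 := sub_ne_zero.2 fun h => hab (log_injOn_pos ha hb h)
  have hderiv : ∀ t : ℝ, HasDerivAt (fun t => a ^ t * b ^ (1 - t)) (a ^ t * b ^ (1 - t) * c) t := by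
    intro t
    refine (((hasDerivAt_id t).const_rpow ha).mul
      (((hasDerivAt_id t).const_sub 1).const_rpow hb)).congr_deriv ?_
    simp only [id_eq, c]
    ring
  have hFTC : ∫ t in (0 : ℝ)..1, a ^ t * b ^ (1 - t) * c = a - b := by
    rw [integral_eq_sub_of_hasDerivAt (fun t _ => hderiv t)
      (((continuous_rpow_mul_rpow ha hb).mul continuous_const).intervalIntegrable 0 1)]
    simp
  rw [intervalIntegral.integral_mul_const] at hFTC
  rw [logMean, if_neg hab, eq_comm, ← neg_sub a b, ← neg_sub (log a), neg_div_neg_eq,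
    eq_div_iff hc, hFTC]

/-- Hölder's inequality for two terms: apply weighted AM-GM to the normalized pairs
`(x / (x + u), y / (y + v))` and `(u / (x + u), v / (y + v))`, and add. -/
lemma rpow_mul_rpow_add_rpow_mul_rpow_le {t x y u v : ℝ} (ht₀ : 0 ≤ t) (ht₁ : t ≤ 1)
    (hx : 0 ≤ x) (hy : 0 ≤ y) (hu : 0 ≤ u) (hv : 0 ≤ v) (hxu : 0 < x + u) (hyv : 0 < y + v) :
    x ^ t * y ^ (1 - t) + u ^ t * v ^ (1 - t) ≤ (x + u) ^ t * (y + v) ^ (1 - t) := by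
  set G := (x + u) ^ t * (y + v) ^ (1 - t)
  have hG : 0 < G := by positivity
  have amgm : ∀ p q : ℝ, 0 ≤ p → 0 ≤ q →
      p ^ t * q ^ (1 - t) ≤ G * (t * (p / (x + u)) + (1 - t) * (q / (y + v))) := by
    intro p q hp hq
    have h := geom_mean_le_arith_mean2_weighted ht₀ (sub_nonneg.2 ht₁)
      (div_nonneg hp hxu.le) (div_nonneg hq hyv.le) (add_sub_cancel t 1)
    rw [div_rpow hp hxu.le, div_rpow hq hyv.le, div_mul_div_comm, div_le_iff₀ hG] at h
    linarith
  calc x ^ t * y ^ (1 - t) + u ^ t * v ^ (1 - t)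
      ≤ G * (t * (x / (x + u)) + (1 - t) * (y / (y + v)))
        + G * (t * (u / (x + u)) + (1 - t) * (v / (y + v))) :=
        add_le_add (amgm x y hx hy) (amgm u v hu hv)
    _ = G := by field_simp; ring

lemma mul_rpow_mul_mul_rpow {t c x y : ℝ} (hc : 0 ≤ c) (hx : 0 ≤ x) (hy : 0 ≤ y) :
    (c * x) ^ t * (c * y) ^ (1 - t) = c * (x ^ t * y ^ (1 - t)) := by
  rw [mul_rpow hc hx, mul_rpow hc hy, mul_mul_mul_comm, ← rpow_add' hc (by simp), add_sub_cancel,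
    rpow_one]

lemma concaveOn_rpow_mul_rpow {t : ℝ} (ht₀ : 0 ≤ t) (ht₁ : t ≤ 1) :
    ConcaveOn ℝ (Ioi (0 : ℝ) ×ˢ Ioi (0 : ℝ)) fun p : ℝ × ℝ => p.1 ^ t * p.2 ^ (1 - t) := by
  refine ⟨(convex_Ioi 0).prod (convex_Ioi 0), ?_⟩
  rintro ⟨x, y⟩ ⟨hx, hy⟩ ⟨u, v⟩ ⟨hu, hv⟩ α β hα hβ hαβ
  simp only [mem_Ioi, Prod.smul_mk, Prod.mk_add_mk, smul_eq_mul] at *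
  rw [← mul_rpow_mul_mul_rpow hα hx.le hy.le, ← mul_rpow_mul_mul_rpow hβ hu.le hv.le]
  exact rpow_mul_rpow_add_rpow_mul_rpow_le ht₀ ht₁ (by positivity) (by positivity)
    (by positivity) (by positivity) (convex_Ioi (0 : ℝ) hx hu hα hβ hαβ)
    (convex_Ioi (0 : ℝ) hy hv hα hβ hαβ)

lemma ConcaveOn.intervalIntegral {E : Type*} [AddCommGroup E] [Module ℝ E] {s : Set E}
    {f : ℝ → E → ℝ} {a b : ℝ} (hab : a ≤ b) (hs : Convex ℝ s)
    (hf : ∀ t ∈ Icc a b, ConcaveOn ℝ s (f t))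
    (hint : ∀ x ∈ s, IntervalIntegrable (f · x) MeasureTheory.volume a b) :
    ConcaveOn ℝ s fun x => ∫ t in a..b, f t x := by
  refine ⟨hs, fun x hx y hy α β hα hβ hαβ => ?_⟩
  simp only [smul_eq_mul]
  rw [← integral_const_mul, ← integral_const_mul,
    ← integral_add ((hint x hx).const_mul α) ((hint y hy).const_mul β)]
  exact integral_mono_on hab (((hint x hx).const_mul α).add ((hint y hy).const_mul β))
    (hint _ (hs hx hy hα hβ hαβ)) fun t ht => (hf t ht).2 hx hy hα hβ hαβ

lemma concaveOn_logMean :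
    ConcaveOn ℝ (Ioi (0 : ℝ) ×ˢ Ioi (0 : ℝ)) fun p : ℝ × ℝ => logMean p.1 p.2 := by
  have hs : Convex ℝ (Ioi (0 : ℝ) ×ˢ Ioi (0 : ℝ)) := (convex_Ioi 0).prod (convex_Ioi 0)
  refine (ConcaveOn.intervalIntegral zero_le_one hs (fun t ht => concaveOn_rpow_mul_rpow ht.1 ht.2)
    fun p hp => (continuous_rpow_mul_rpow hp.1 hp.2).intervalIntegrable 0 1).congr ?_
  rintro ⟨a, b⟩ ⟨ha, hb⟩
  exact (logMean_eq_integral ha hb).symm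

lemma logMean_le_add_div_two {a b : ℝ} (ha : 0 < a) (hb : 0 < b) :
    logMean a b ≤ (a + b) / 2 := by
  have hA : ∫ t in (0 : ℝ)..1, t * a + (1 - t) * b = (a + b) / 2 := by
    have : (fun t : ℝ => t * a + (1 - t) * b) = fun t => t * (a - b) + b := by ext; ring
    rw [this, integral_add (Continuous.intervalIntegrable (by fun_prop) 0 1)
      intervalIntegrable_const, intervalIntegral.integral_mul_const, integral_id,
      intervalIntegral.integral_const, smul_eq_mul]
    ring
  rw [logMean_eq_integral ha hb, ← hA]
  refine integral_mono_on zero_le_one ((continuous_rpow_mul_rpow ha hb).intervalIntegrable 0 1)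
    (Continuous.intervalIntegrable (by fun_prop) 0 1) ?_
  exact fun t ht => geom_mean_le_arith_mean2_weighted ht.1 (sub_nonneg.2 ht.2) ha.le hb.le
    (add_sub_cancel t 1)

theorem MAL_nonneg_convex :
    (∀ a b : ℝ, 0 < a → 0 < b → 0 ≤ MAL (a, b)) ∧
      ConvexOn ℝ {p : ℝ × ℝ | 0 < p.1 ∧ 0 < p.2} MAL := by
  refine ⟨fun a b ha hb => sub_nonneg.2 (logMean_le_add_div_two ha hb), ?_⟩
  have hA : ConvexOn ℝ (Ioi (0 : ℝ) ×ˢ Ioi (0 : ℝ)) fun p : ℝ × ℝ => (p.1 + p.2) / 2 := by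
    refine ⟨(convex_Ioi 0).prod (convex_Ioi 0), fun x _ y _ α β _ _ _ => le_of_eq ?_⟩
    simp only [Prod.fst_add, Prod.snd_add, Prod.smul_fst, Prod.smul_snd, smul_eq_mul]
    ring
  exact hA.sub concaveOn_logMean
end

section
/- For all a, b > 0 with a ≠ b, S(a,b) - L(a,b) ≤ (5/2)·(A(a,b) - L(a,b)), where S(a,b) = √((a²+b²)/2), A(a,b) = (a+b)/2, and L(a,b) = (b-a)/(ln b - ln a). -/
/-!
With `G = √(ab)`, the Pólya–Szegő bound `L ≤ (A + 2G)/3` reduces the claim `S ≤ (5/2)A - (3/2)L`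
to `S + G ≤ 2A`, which holds because `S² + G² = 2A²`. The Pólya–Szegő bound is, after the
substitution `t = √(b/a)`, the inequality `3(t² - 1) ≤ (t² + 4t + 1) log t` for `t ≥ 1`, whose
difference vanishes to third order at `t = 1` and has third derivative `2(t - 1)²/t³ ≥ 0`.
-/

open Real Set

lemma nonneg_of_hasDerivAt_nonneg_Ici {f f' : ℝ → ℝ} {c : ℝ}
    (hf : ∀ x ∈ Ici c, HasDerivAt f (f' x) x) (hc : f c = 0) (hf' : ∀ x ∈ Ici c, 0 ≤ f' x) :
    ∀ x ∈ Ici c, 0 ≤ f x := by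
  have hmono : MonotoneOn f (Ici c) := by
    refine monotoneOn_of_hasDerivWithinAt_nonneg (f' := f') (convex_Ici c)
      (fun x hx ↦ (hf x hx).continuousAt.continuousWithinAt) (fun x hx ↦ ?_) (fun x hx ↦ ?_)
    all_goals rw [interior_Ici] at hx
    · exact (hf x (mem_Ici_of_Ioi hx)).hasDerivWithinAt
    · exact hf' x (mem_Ici_of_Ioi hx)
  intro x hx
  simpa [hc] using hmono self_mem_Ici hx hx

lemma three_mul_sq_sub_one_le_mul_log {t : ℝ} (ht : 1 ≤ t) :
    3 * (t ^ 2 - 1) ≤ (t ^ 2 + 4 * t + 1) * log t := by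
  have hf'' : ∀ x ∈ Ici (1 : ℝ), 0 ≤ 2 * log x - 3 + 4 * x⁻¹ - x⁻¹ ^ 2 := by
    refine nonneg_of_hasDerivAt_nonneg_Ici (f' := fun x ↦ 2 * (x - 1) ^ 2 / x ^ 3)
      (fun x hx ↦ ?_) (by norm_num) fun x (hx : 1 ≤ x) ↦ by positivity
    have hx : x ≠ 0 := (one_pos.trans_le hx).ne'
    have hinv := hasDerivAt_inv hx
    refine ((((hasDerivAt_log hx).const_mul 2).sub_const 3).add (hinv.const_mul 4)).sub
      (hinv.pow 2) |>.congr_deriv ?_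
    simp only [Nat.cast_ofNat, Nat.add_one_sub_one, pow_one]
    field_simp
    ring
  have hf' : ∀ x ∈ Ici (1 : ℝ), 0 ≤ (2 * x + 4) * log x - 5 * x + 4 + x⁻¹ := by
    refine nonneg_of_hasDerivAt_nonneg_Ici (fun x hx ↦ ?_) (by norm_num) hf''
    have hx : x ≠ 0 := (one_pos.trans_le hx).ne'
    have hlin : HasDerivAt (fun y : ℝ ↦ 2 * y + 4) 2 x := by
      simpa using ((hasDerivAt_id' x).const_mul 2).add_const 4
    refine (((hlin.mul (hasDerivAt_log hx)).sub ((hasDerivAt_id' x).const_mul 5)).add_const 4).add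
      (hasDerivAt_inv hx) |>.congr_deriv ?_
    field_simp
    ring
  have hf : ∀ x ∈ Ici (1 : ℝ), 0 ≤ (x ^ 2 + 4 * x + 1) * log x - 3 * (x ^ 2 - 1) := by
    refine nonneg_of_hasDerivAt_nonneg_Ici (fun x hx ↦ ?_) (by simp) hf'
    have hx : x ≠ 0 := (one_pos.trans_le hx).ne'
    have hquad : HasDerivAt (fun y : ℝ ↦ y ^ 2 + 4 * y + 1) (2 * x + 4) x := by
      simpa [mul_comm] using
        (((hasDerivAt_id' x).pow 2).add ((hasDerivAt_id' x).const_mul 4)).add_const 1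
    refine (hquad.mul (hasDerivAt_log hx)).sub
      ((((hasDerivAt_id' x).pow 2).sub_const 1).const_mul 3) |>.congr_deriv ?_
    field_simp
    ring
  linarith [hf t ht]

lemma three_mul_sq_sub_sq_le_mul_log_sub {x y : ℝ} (hx : 0 < x) (hxy : x ≤ y) :
    3 * (y ^ 2 - x ^ 2) ≤ (x ^ 2 + 4 * x * y + y ^ 2) * (log y - log x) := by
  have key := three_mul_sq_sub_one_le_mul_log ((one_le_div hx).2 hxy)
  rw [log_div (hx.trans_le hxy).ne' hx.ne'] at key
  have := mul_le_mul_of_nonneg_left key (sq_nonneg x)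
  calc 3 * (y ^ 2 - x ^ 2) = x ^ 2 * (3 * ((y / x) ^ 2 - 1)) := by field_simp
    _ ≤ x ^ 2 * (((y / x) ^ 2 + 4 * (y / x) + 1) * (log y - log x)) := this
    _ = (x ^ 2 + 4 * x * y + y ^ 2) * (log y - log x) := by field_simp; ring

/-- The Pólya–Szegő bound `L(a, b) ≤ (A(a, b) + 2 G(a, b)) / 3`; for `a = b` the left side is the
junk value `0 / 0 = 0`. -/
lemma logMean_le {a b : ℝ} (ha : 0 < a) (hb : 0 < b) :
    (b - a) / (log b - log a) ≤ (a + b + 4 * √(a * b)) / 6 := by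
  wlog hab : a ≤ b with H
  · have := H hb ha (le_of_not_ge hab)
    rwa [← neg_sub b a, ← neg_sub (log b), neg_div_neg_eq, add_comm b, mul_comm b] at this
  have key := three_mul_sq_sub_sq_le_mul_log_sub (sqrt_pos.2 ha) (sqrt_le_sqrt hab)
  rw [log_sqrt ha.le, log_sqrt hb.le, sq_sqrt ha.le, sq_sqrt hb.le, mul_assoc, ← sqrt_mul ha.le]
    at key
  exact div_le_of_le_mul₀ (sub_nonneg.2 (log_le_log ha hab)) (by positivity) (by linarith)

lemma sqrt_add_sq_div_two_add_sqrt_mul_le {a b : ℝ} (ha : 0 ≤ a) (hb : 0 ≤ b) :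
    √((a ^ 2 + b ^ 2) / 2) + √(a * b) ≤ a + b := by
  have hS := sq_sqrt (show 0 ≤ (a ^ 2 + b ^ 2) / 2 by positivity)
  have hG := sq_sqrt (mul_nonneg ha hb)
  refine (pow_le_pow_iff_left₀ (by positivity) (by positivity) two_ne_zero).1 ?_
  nlinarith [sq_nonneg (√((a ^ 2 + b ^ 2) / 2) - √(a * b))]

theorem MSL_le_MAL_general (a b : ℝ) (ha : 0 < a) (hb : 0 < b) :
    Real.sqrt ((a ^ 2 + b ^ 2) / 2) - (b - a) / (Real.log b - Real.log a) ≤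
      (5 / 2) * ((a + b) / 2 - (b - a) / (Real.log b - Real.log a)) := by
  linarith [logMean_le ha hb, sqrt_add_sq_div_two_add_sqrt_mul_le ha.le hb.le]

theorem MSL_le_MAL (a b : ℝ) (ha : 0 < a) (hb : 0 < b) (hab : a ≠ b) :
    Real.sqrt ((a ^ 2 + b ^ 2) / 2) - (b - a) / (Real.log b - Real.log a) ≤
      (5 / 2) * ((a + b) / 2 - (b - a) / (Real.log b - Real.log a)) :=
  MSL_le_MAL_general a b ha hb
end

section
/- For all a, b > 0 with a ≠ b, A(a,b) - L(a,b) ≤ 2·(N₂(a,b) - L(a,b)), i.e. 2N₂(a,b) ≥ A(a,b) + L(a,b). -/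
/-!
Write `u = √a`, `v = √b`. The Padé-type bound `log t ≥ 3(t² - 1)/(t² + 4t + 1)` for `t ≥ 1`
(the difference has derivative `(t - 1)⁴ / (t (t² + 4t + 1)²) ≥ 0`), applied at `t = v/u`, gives
Carlson's bound `L(a, b) ≤ (a + b + 4√(ab))/6`. Hence `A + L ≤ 2(a + b + √(ab))/3`, and
`(a + b + √(ab))/3 ≤ N₂(a, b)` is the polynomial inequality
`8(u² + uv + v²)² ≤ 9(u + v)²(u² + v²)`, i.e. `0 ≤ (u - v)² ((u + v)² + 2uv)`.
-/

open Real

lemma hasDerivAt_log_sub_pade {t : ℝ} (ht : 0 < t) :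
    HasDerivAt (fun s => log s - 3 * (s ^ 2 - 1) / (s ^ 2 + 4 * s + 1))
      ((t - 1) ^ 4 / (t * (t ^ 2 + 4 * t + 1) ^ 2)) t := by
  have hden_ne : t ^ 2 + 4 * t + 1 ≠ 0 := by positivity
  have hnum : HasDerivAt (fun s : ℝ => 3 * (s ^ 2 - 1)) (3 * (2 * t)) t := by
    simpa using ((hasDerivAt_pow 2 t).sub_const 1).const_mul 3
  have hden : HasDerivAt (fun s : ℝ => s ^ 2 + 4 * s + 1) (2 * t + 4) t := by
    simpa using ((hasDerivAt_pow 2 t).add ((hasDerivAt_id t).const_mul 4)).add_const 1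
  refine ((hasDerivAt_log ht.ne').sub (hnum.div hden hden_ne)).congr_deriv ?_
  field_simp
  ring

lemma pade_le_log {t : ℝ} (ht : 1 ≤ t) : 3 * (t ^ 2 - 1) / (t ^ 2 + 4 * t + 1) ≤ log t := by
  have hmono : MonotoneOn (fun s => log s - 3 * (s ^ 2 - 1) / (s ^ 2 + 4 * s + 1)) (Set.Ioi 0) := by
    refine monotoneOn_of_hasDerivWithinAt_nonneg (convex_Ioi 0)
      (f' := fun s => (s - 1) ^ 4 / (s * (s ^ 2 + 4 * s + 1) ^ 2))
      (fun s hs => (hasDerivAt_log_sub_pade hs).continuousAt.continuousWithinAt) ?_ ?_ <;>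
      rw [interior_Ioi] <;> intro s (hs : 0 < s)
    · exact (hasDerivAt_log_sub_pade hs).hasDerivWithinAt
    · positivity
  simpa using hmono (Set.mem_Ioi.2 one_pos) (Set.mem_Ioi.2 (one_pos.trans_le ht)) ht

lemma div_log_sub_log_le_of_lt {a b : ℝ} (ha : 0 < a) (hab : a < b) :
    (b - a) / (log b - log a) ≤ (a + b + 4 * √(a * b)) / 6 := by
  rw [sqrt_mul ha.le]
  set u := √a
  set v := √b
  have hu : 0 < u := sqrt_pos.2 ha
  have huv : u < v := sqrt_lt_sqrt ha.le hab
  have hv : 0 < v := hu.trans huv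
  have hlog : log b - log a = 2 * log (v / u) := by
    rw [log_div hv.ne' hu.ne', log_sqrt ha.le, log_sqrt (ha.trans hab).le]
    ring
  have hdiff : 0 < v ^ 2 - u ^ 2 := by nlinarith
  have hpade : 3 * (v ^ 2 - u ^ 2) / (u ^ 2 + 4 * u * v + v ^ 2) ≤ log (v / u) := by
    convert pade_le_log ((one_le_div hu).2 huv.le) using 1
    field_simp
    ring
  have hu2 : u ^ 2 = a := sq_sqrt ha.le
  have hv2 : v ^ 2 = b := sq_sqrt (ha.trans hab).le
  rw [hlog, ← hu2, ← hv2]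
  calc (v ^ 2 - u ^ 2) / (2 * log (v / u))
      ≤ (v ^ 2 - u ^ 2) / (2 * (3 * (v ^ 2 - u ^ 2) / (u ^ 2 + 4 * u * v + v ^ 2))) := by
        gcongr
    _ = (u ^ 2 + v ^ 2 + 4 * (u * v)) / 6 := by
        field_simp
        ring

lemma div_log_sub_log_le {a b : ℝ} (ha : 0 < a) (hb : 0 < b) (hab : a ≠ b) :
    (b - a) / (log b - log a) ≤ (a + b + 4 * √(a * b)) / 6 := by
  rcases hab.lt_or_gt with h | h
  · exact div_log_sub_log_le_of_lt ha h
  · have := div_log_sub_log_le_of_lt hb h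
    rwa [← neg_div_neg_eq, neg_sub, neg_sub, add_comm b, mul_comm b] at this

lemma add_add_sqrt_mul_div_three_le {a b : ℝ} (ha : 0 ≤ a) (hb : 0 ≤ b) :
    (a + b + √(a * b)) / 3 ≤ (√a + √b) / 2 * √((a + b) / 2) := by
  rw [sqrt_mul ha]
  have hu2 : √a ^ 2 = a := sq_sqrt ha
  have hv2 : √b ^ 2 = b := sq_sqrt hb
  have hw2 : √((a + b) / 2) ^ 2 = (a + b) / 2 := sq_sqrt (by positivity)
  set u := √a
  set v := √b
  have hu : 0 ≤ u := sqrt_nonneg a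
  have hv : 0 ≤ v := sqrt_nonneg b
  rw [← pow_le_pow_iff_left₀ (by positivity) (by positivity) two_ne_zero, mul_pow, hw2,
    ← hu2, ← hv2]
  have key : ((u + v) / 2) ^ 2 * ((u ^ 2 + v ^ 2) / 2) - ((u ^ 2 + v ^ 2 + u * v) / 3) ^ 2
      = (u - v) ^ 2 * ((u + v) ^ 2 + 2 * (u * v)) / 72 := by ring
  linarith [key, show 0 ≤ (u - v) ^ 2 * ((u + v) ^ 2 + 2 * (u * v)) by positivity]

theorem MAL_le_two_MN2L (a b : ℝ) (ha : 0 < a) (hb : 0 < b) (hab : a ≠ b) :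
    (a + b) / 2 - (b - a) / (Real.log b - Real.log a) ≤
      2 * (((Real.sqrt a + Real.sqrt b) / 2) * Real.sqrt ((a + b) / 2) -
        (b - a) / (Real.log b - Real.log a)) := by
  have hL := div_log_sub_log_le ha hb hab
  have hN := add_add_sqrt_mul_div_three_le ha.le hb.le
  linarith
end

section
/- For all a, b > 0 with a ≠ b, A(a,b) - G(a,b) ≤ (3/2)·(A(a,b) - L(a,b)), i.e. (a+b)/2 - √(ab) ≤ (3/2)·((a+b)/2 - (b-a)/(ln b - ln a)), equivalently 3L(a,b) ≤ A(a,b) + 2G(a,b). -/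
private lemma key_log (x : ℝ) (hx : 1 ≤ x) :
    3 * (x ^ 2 - 1) / (x ^ 2 + 4 * x + 1) ≤ Real.log x := by
  set f : ℝ → ℝ := fun y => Real.log y - 3 * (y ^ 2 - 1) / (y ^ 2 + 4 * y + 1) with hf
  have hder : ∀ y ∈ Set.Ici (1 : ℝ),
      HasDerivAt f ((y - 1) ^ 4 / (y * (y ^ 2 + 4 * y + 1) ^ 2)) y := by
    intro y hy
    have hy1 : (1 : ℝ) ≤ y := hy
    have hy0 : (0 : ℝ) < y := lt_of_lt_of_le one_pos hy1
    have hden : y ^ 2 + 4 * y + 1 ≠ 0 := by nlinarith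
    have h1 : HasDerivAt (fun y : ℝ => 3 * (y ^ 2 - 1)) (3 * (2 * y)) y := by
      simpa using ((hasDerivAt_pow 2 y).sub_const 1).const_mul 3
    have h2 : HasDerivAt (fun y : ℝ => y ^ 2 + 4 * y + 1) (2 * y + 4) y := by
      have := ((hasDerivAt_pow 2 y).add ((hasDerivAt_id y).const_mul 4)).add_const 1
      simpa using this
    have h3 := h1.div h2 hden
    have h4 := (Real.hasDerivAt_log (ne_of_gt hy0)).sub h3
    refine h4.congr_deriv ?_
    field_simp
    ring
  have hcont : ContinuousOn f (Set.Ici 1) := fun y hy =>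
    (hder y hy).continuousAt.continuousWithinAt
  have hmono : MonotoneOn f (Set.Ici 1) := by
    apply monotoneOn_of_deriv_nonneg (convex_Ici 1) hcont
    · intro y hy
      rw [interior_Ici] at hy
      exact (hder y (Set.mem_Ici.mpr (le_of_lt hy))).differentiableAt.differentiableWithinAt
    · intro y hy
      rw [interior_Ici] at hy
      have hy0 : (0 : ℝ) < y := lt_trans one_pos hy
      rw [(hder y (Set.mem_Ici.mpr (le_of_lt hy))).deriv]
      positivity
  have h := hmono (Set.self_mem_Ici) hx hx
  simp only [hf, Real.log_one] at h
  norm_num at h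
  linarith

private lemma aux_lt (a b : ℝ) (ha : 0 < a) (hab : a < b) :
    (a + b) / 2 - Real.sqrt (a * b) ≤
      (3 / 2) * ((a + b) / 2 - (b - a) / (Real.log b - Real.log a)) := by
  have hb : 0 < b := lt_trans ha hab
  have hsa : 0 < Real.sqrt a := Real.sqrt_pos.mpr ha
  have hsb : 0 < Real.sqrt b := Real.sqrt_pos.mpr hb
  set s : ℝ := Real.sqrt b / Real.sqrt a with hs
  have hs1 : 1 < s := by
    rw [hs, lt_div_iff₀ hsa, one_mul]
    exact Real.sqrt_lt_sqrt ha.le hab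
  have hs0 : 0 < s := lt_trans one_pos hs1
  have hb' : b = a * s ^ 2 := by
    rw [hs, div_pow, Real.sq_sqrt ha.le, Real.sq_sqrt hb.le]
    field_simp
  have hsaa : Real.sqrt a * Real.sqrt a = a := Real.mul_self_sqrt ha.le
  have hsab : Real.sqrt (a * b) = a * s := by
    rw [Real.sqrt_mul ha.le, hs]
    field_simp
    nlinarith [hsaa]
  have hlog : Real.log b - Real.log a = 2 * Real.log s := by
    rw [hs, Real.log_div (ne_of_gt hsb) (ne_of_gt hsa), Real.log_sqrt ha.le,
      Real.log_sqrt hb.le]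
    ring
  have ht : 0 < Real.log s := Real.log_pos hs1
  have hkey := key_log s hs1.le
  have hden : (0 : ℝ) < s ^ 2 + 4 * s + 1 := by positivity
  have h3 : 3 * (s ^ 2 - 1) ≤ Real.log s * (s ^ 2 + 4 * s + 1) := by
    rw [div_le_iff₀ hden] at hkey
    linarith
  set t := Real.log s with htdef
  have hbound : (b - a) / (Real.log b - Real.log a) ≤ a * (s ^ 2 + 4 * s + 1) / 6 := by
    rw [hlog, hb', div_le_iff₀ (by positivity)]
    nlinarith [mul_le_mul_of_nonneg_left h3 ha.le]
  rw [hsab]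
  nlinarith [hbound, mul_nonneg ha.le (sq_nonneg (s - 1)), hb']

theorem MAG_le_MAL (a b : ℝ) (ha : 0 < a) (hb : 0 < b) (hab : a ≠ b) :
    (a + b) / 2 - Real.sqrt (a * b) ≤
      (3 / 2) * ((a + b) / 2 - (b - a) / (Real.log b - Real.log a)) := by
  rcases lt_or_gt_of_ne hab with h | h
  · exact aux_lt a b ha h
  · have := aux_lt b a hb h
    rw [mul_comm b a] at this
    have e1 : (b - a) / (Real.log b - Real.log a) = (a - b) / (Real.log a - Real.log b) := by
      rw [← neg_sub b a, ← neg_sub (Real.log b), neg_div_neg_eq]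
    rw [e1, add_comm a b]
    linarith [this]
end

section
/- For all a, b > 0 with a ≠ b, S(a,b) - L(a,b) ≤ (5/3)·(A(a,b) - G(a,b)), where S(a,b) = √((a²+b²)/2), A(a,b) = (a+b)/2, G(a,b) = √(ab), and L(a,b) = (b-a)/(ln b - ln a). -/
/-!
Write `a = m e^{-t}` and `b = m e^t` with `m = √(ab)`. Then `S = m √(cosh 2t)`, `L = m sinh t / t`,
`A = m cosh t` and `G = m`, so after dividing by `m` the inequality becomes the one-variable
inequality `√(cosh 2t) - sinh t / t ≤ 5/3 (cosh t - 1)`, which is even in `t`. Bounding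
`√(cosh 2t) = √(c² + s²) ≤ c + s²/(2c)` (with `c = cosh t`, `s = sinh t`) reduces it to the polynomial
inequality `10 t c ≤ 6 s c + t s² + 4 t`, which follows from `c² = 1 + s²` and the Taylor bound
`t + t³/6 ≤ sinh t`.
-/

open Real

theorem Real.add_pow_three_div_six_le_sinh {t : ℝ} (ht : 0 ≤ t) : t + t ^ 3 / 6 ≤ sinh t := by
  have h := sum_le_hasSum (Finset.range 2) (fun n _ => by positivity) (hasSum_sinh t)
  norm_num [Finset.sum_range_succ, Nat.factorial] at h
  linarith

theorem Real.six_mul_add_four_mul_mul_sinh_sq_le {t : ℝ} (ht : 0 ≤ t) :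
    6 * t + 4 * t * sinh t ^ 2 ≤ 6 * sinh t + 3 * sinh t ^ 3 := by
  have hs := add_pow_three_div_six_le_sinh ht
  set s := sinh t
  set s₀ := t + t ^ 3 / 6
  have hts₀ : t ≤ s₀ := by simp only [s₀]; nlinarith [pow_nonneg ht 3]
  have hs₀ : 6 * t + 4 * t * s₀ ^ 2 ≤ 6 * s₀ + 3 * s₀ ^ 3 := by
    simp only [s₀]; nlinarith [pow_nonneg ht 5, pow_nonneg ht 7, pow_nonneg ht 9]
  -- `s ↦ 6 s + 3 s³ - 4 t s²` is increasing for `s ≥ t`: this is the sign of its difference quotient.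
  have hmono : 4 * t * (s + s₀) ≤ 6 + 3 * (s ^ 2 + s * s₀ + s₀ ^ 2) := by
    have h0 : 0 ≤ s₀ := ht.trans hts₀
    nlinarith [mul_le_mul_of_nonneg_left hts₀ (h0.trans hs), mul_le_mul_of_nonneg_left hts₀ h0,
      mul_le_mul_of_nonneg_left (hts₀.trans hs) (h0.trans hs), sq_nonneg (s - s₀)]
  nlinarith [mul_nonneg (sub_nonneg.2 hs) (sub_nonneg.2 hmono)]

theorem Real.ten_mul_mul_cosh_le {t : ℝ} (ht : 0 ≤ t) :
    10 * t * cosh t ≤ 6 * sinh t * cosh t + t * sinh t ^ 2 + 4 * t := by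
  have hc1 := one_le_cosh t
  have hcs : cosh t ^ 2 = 1 + sinh t ^ 2 := by rw [cosh_sq]; ring
  rcases le_or_gt (5 * t) (3 * sinh t) with h | h
  · nlinarith [mul_nonneg (zero_le_one.trans hc1) (sub_nonneg.2 h), mul_nonneg ht (sq_nonneg (sinh t))]
  · have hc : cosh t ≤ 1 + sinh t ^ 2 / 2 := by nlinarith [sq_nonneg (sinh t)]
    nlinarith [six_mul_add_four_mul_mul_sinh_sq_le ht, mul_nonneg (sub_nonneg.2 hc) (sub_nonneg.2 h.le)]

theorem Real.sqrt_cosh_two_mul_sub_sinh_div_le {t : ℝ} (ht : t ≠ 0) :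
    √(cosh (2 * t)) - sinh t / t ≤ 5 / 3 * (cosh t - 1) := by
  wlog htpos : 0 < t generalizing t
  · simpa [cosh_neg, sinh_neg, neg_div_neg_eq] using
      this (neg_ne_zero.2 ht) (by linarith [lt_of_le_of_ne (not_lt.1 htpos) ht])
  have hkey := ten_mul_mul_cosh_le htpos.le
  obtain ⟨c, s, hc, hs⟩ : ∃ c s, cosh t = c ∧ sinh t = s := ⟨_, _, rfl, rfl⟩
  have hc1 : 1 ≤ c := hc ▸ one_le_cosh t
  have hcs : c ^ 2 = 1 + s ^ 2 := by rw [← hc, ← hs, cosh_sq]; ring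
  rw [hc, hs] at hkey
  have hsqrt : √(c ^ 2 + s ^ 2) ≤ c + s ^ 2 / (2 * c) := by
    have : (c + s ^ 2 / (2 * c)) ^ 2 = c ^ 2 + s ^ 2 + (s ^ 2 / (2 * c)) ^ 2 := by
      field_simp; ring
    rw [sqrt_le_iff]
    exact ⟨by positivity, by nlinarith [sq_nonneg (s ^ 2 / (2 * c))]⟩
  have hgap : 5 / 3 * (c - 1) - (c + s ^ 2 / (2 * c) - s / t) =
      (6 * s * c + t * s ^ 2 + 4 * t - 10 * t * c) / (6 * t * c) := by
    field_simp
    linear_combination 24 * t * hcs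
  have hgap_nonneg : 0 ≤ (6 * s * c + t * s ^ 2 + 4 * t - 10 * t * c) / (6 * t * c) := by
    apply div_nonneg <;> nlinarith
  rw [cosh_two_mul, hc, hs]
  linarith

theorem Real.exists_eq_mul_exp_neg_and_eq_mul_exp {a b : ℝ} (ha : 0 < a) (hb : 0 < b) :
    ∃ m t, 0 < m ∧ a = m * exp (-t) ∧ b = m * exp t := by
  refine ⟨exp ((log a + log b) / 2), (log b - log a) / 2, exp_pos _, ?_, ?_⟩
  · rw [← exp_add, show (log a + log b) / 2 + -((log b - log a) / 2) = log a by ring, exp_log ha]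
  · rw [← exp_add, show (log a + log b) / 2 + (log b - log a) / 2 = log b by ring, exp_log hb]

theorem MSL_le_MAG (a b : ℝ) (ha : 0 < a) (hb : 0 < b) (hab : a ≠ b) :
    Real.sqrt ((a ^ 2 + b ^ 2) / 2) - (b - a) / (Real.log b - Real.log a) ≤
      (5 / 3) * ((a + b) / 2 - Real.sqrt (a * b)) := by
  obtain ⟨m, t, hm, rfl, rfl⟩ := exists_eq_mul_exp_neg_and_eq_mul_exp ha hb
  have ht : t ≠ 0 := by rintro rfl; simp at hab
  have hS : √(((m * exp (-t)) ^ 2 + (m * exp t) ^ 2) / 2) = m * √(cosh (2 * t)) := by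
    rw [← sqrt_sq hm.le, ← sqrt_mul (sq_nonneg _), sqrt_sq hm.le, cosh_two_mul, cosh_eq, sinh_eq]
    ring_nf
  have hL : (m * exp t - m * exp (-t)) / (log (m * exp t) - log (m * exp (-t))) =
      m * (sinh t / t) := by
    rw [log_mul hm.ne' (exp_pos _).ne', log_mul hm.ne' (exp_pos _).ne', log_exp, log_exp, sinh_eq,
      show log m + t - (log m + -t) = 2 * t by ring]
    field_simp
  have hA : (m * exp (-t) + m * exp t) / 2 = m * cosh t := by rw [cosh_eq]; ring
  have hG : √(m * exp (-t) * (m * exp t)) = m := by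
    rw [mul_mul_mul_comm, ← exp_add, neg_add_cancel, exp_zero, mul_one, ← sq, sqrt_sq hm.le]
  rw [hS, hL, hA, hG]
  linarith [mul_le_mul_of_nonneg_left (sqrt_cosh_two_mul_sub_sinh_div_le ht) hm.le]
end

section
/- For all a, b > 0 with a ≠ b, (2N₃(a,b) + 3L(a,b))/5 ≤ (5A(a,b) + 7L(a,b))/12, equivalently L(a,b) ≤ 25A(a,b) - 24N₃(a,b). -/
/-!
Since `N₃ = (2A + G)/3`, the claim `L ≤ 25A - 24N₃` reads `L ≤ 9A - 8G`, which follows from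
`G ≤ A` and `L ≤ A`. The latter is `2(t - 1)/(t + 1) ≤ log t`, the first term of the
nonnegative series `log ((1 + x)/(1 - x)) = 2 ∑ x^(2k+1)/(2k+1)` at `x = (t - 1)/(t + 1)`.
-/

open Real

theorem two_mul_le_log_one_add_sub_log_one_sub {x : ℝ} (hx₀ : 0 ≤ x) (hx₁ : x < 1) :
    2 * x ≤ log (1 + x) - log (1 - x) := by
  have hsum := hasSum_log_sub_log_of_abs_lt_one (abs_lt.mpr ⟨by linarith, hx₁⟩)
  simpa using le_hasSum hsum 0 fun k _ => by positivity

theorem two_mul_sub_le_add_mul_log_sub_log {a b : ℝ} (ha : 0 < a) (hab : a ≤ b) :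
    2 * (b - a) ≤ (a + b) * (log b - log a) := by
  have hb : 0 < b := ha.trans_le hab
  have hpos : 0 < a + b := by linarith
  have hx₀ : 0 ≤ (b - a) / (a + b) := div_nonneg (by linarith) hpos.le
  have hx₁ : (b - a) / (a + b) < 1 := (div_lt_one hpos).mpr (by linarith)
  have h_one_add : 1 + (b - a) / (a + b) = 2 * b / (a + b) := by field_simp; ring
  have h_one_sub : 1 - (b - a) / (a + b) = 2 * a / (a + b) := by field_simp; ring
  have key := two_mul_le_log_one_add_sub_log_one_sub hx₀ hx₁
  rw [h_one_add, h_one_sub, log_div (by positivity) hpos.ne', log_div (by positivity) hpos.ne',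
    log_mul two_ne_zero hb.ne', log_mul two_ne_zero ha.ne', mul_div_assoc',
    div_le_iff₀ hpos] at key
  linarith

theorem sub_div_log_sub_log_le_add_div_two {a b : ℝ} (ha : 0 < a) (hb : 0 < b) :
    (b - a) / (log b - log a) ≤ (a + b) / 2 := by
  wlog hab : a < b generalizing a b
  · rcases (not_lt.mp hab).eq_or_lt with rfl | hba
    · -- the left side is the junk value `0 / 0 = 0`
      simp only [sub_self, div_zero]
      linarith
    · have := this hb ha hba
      rwa [← neg_sub b a, ← neg_sub (log b) (log a), neg_div_neg_eq, add_comm] at this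
  have hlog : 0 < log b - log a := sub_pos.mpr (log_lt_log ha hab)
  rw [div_le_iff₀ hlog]
  linarith [two_mul_sub_le_add_mul_log_sub_log ha hab.le]

theorem sqrt_mul_le_add_div_two {a b : ℝ} (ha : 0 ≤ a) (hb : 0 ≤ b) :
    √(a * b) ≤ (a + b) / 2 :=
  sqrt_le_iff.mpr ⟨by positivity, by nlinarith [sq_nonneg (a - b)]⟩

theorem n3_log_combo_general (a b : ℝ) (ha : 0 < a) (hb : 0 < b) :
    (2 * ((a + Real.sqrt (a * b) + b) / 3) + 3 * ((b - a) / (Real.log b - Real.log a))) / 5 ≤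
      (5 * ((a + b) / 2) + 7 * ((b - a) / (Real.log b - Real.log a))) / 12 := by
  have hG := sqrt_mul_le_add_div_two ha.le hb.le
  have hL := sub_div_log_sub_log_le_add_div_two ha hb
  linarith

theorem n3_log_combo (a b : ℝ) (ha : 0 < a) (hb : 0 < b) (hab : a ≠ b) :
    (2 * ((a + Real.sqrt (a * b) + b) / 3) + 3 * ((b - a) / (Real.log b - Real.log a))) / 5 ≤
      (5 * ((a + b) / 2) + 7 * ((b - a) / (Real.log b - Real.log a))) / 12 :=
  n3_log_combo_general a b ha hb
end
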